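/- arXiv:2510.14806 — 2 statements merged into one kernel-verified Lean document; each statement's English description precedes it below -/
import Mathlib

section
/- Under the noiseless model of the cross-preamble estimator — α : Fin P → ℂ not identically zero, β ∈ ℂ with β ≠ 0, μ > 0, τ_c > 0, positive weights σ₀ p > 0, σ₁ p > 0, r0_p = α_p β, r1_p = α_p μ β e^{−iωτ_c}, ψ₀ = Σ_p α_p conj(r0_p)/(σ₀ p)², ψ₁ = Σ_p α_p μ conj(r1_p)/(σ₁ p)² — if additionally ω·τ_c ∈ (−π, π], then the cross-preamble estimator recovers the CFO exactly: (1/τ_c) · arg(ψ₁ · conj(ψ₀)) = ω, where arg denotes the principal argument taking values in (−π, π]. -/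
open Complex Real

/-- under the noiseless model, the cross-preamble estimator
`(1/τ_c)·arg(ψ₁·conj(ψ₀))` recovers the CFO `ω` exactly whenever
`ω·τ_c ∈ (−π, π]`. -/
theorem cross_preamble_estimator_consistent
    (P : ℕ) (hP : 0 < P) (α : Fin P → ℂ) (hα : ∃ p, α p ≠ 0)
    (β : ℂ) (hβ : β ≠ 0) (μ : ℝ) (hμ : 0 < μ)
    (ω τc : ℝ) (hτc : 0 < τc) (hω : ω * τc ∈ Set.Ioc (-π) π)
    (σ₀ σ₁ : Fin P → ℝ) (hσ₀ : ∀ p, 0 < σ₀ p) (hσ₁ : ∀ p, 0 < σ₁ p)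
    (r0 r1 : Fin P → ℂ)
    (hr0 : ∀ p, r0 p = α p * β)
    (hr1 : ∀ p, r1 p = α p * (μ : ℂ) * β * Complex.exp (-(Complex.I * ω * τc)))
    (ψ₀ ψ₁ : ℂ)
    (hψ₀ : ψ₀ = ∑ p : Fin P, α p * (starRingEnd ℂ) (r0 p) / ((σ₀ p : ℂ) ^ 2))
    (hψ₁ : ψ₁ = ∑ p : Fin P, α p * (μ : ℂ) * (starRingEnd ℂ) (r1 p) / ((σ₁ p : ℂ) ^ 2)) :
    (1 / τc) * Complex.arg (ψ₁ * (starRingEnd ℂ) ψ₀) = ω := by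
  set S₀ : ℝ := ∑ p : Fin P, Complex.normSq (α p) / (σ₀ p) ^ 2 with hS₀
  set S₁ : ℝ := ∑ p : Fin P, Complex.normSq (α p) * μ ^ 2 / (σ₁ p) ^ 2 with hS₁
  have hS₀pos : 0 < S₀ := by
    obtain ⟨q, hq⟩ := hα
    refine Finset.sum_pos' (fun p _ => div_nonneg (Complex.normSq_nonneg _) (sq_nonneg _))
      ⟨q, Finset.mem_univ q, ?_⟩
    exact div_pos (Complex.normSq_pos.2 hq) (pow_pos (hσ₀ q) 2)
  have hS₁pos : 0 < S₁ := by
    obtain ⟨q, hq⟩ := hα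
    refine Finset.sum_pos' (fun p _ => div_nonneg
      (mul_nonneg (Complex.normSq_nonneg _) (sq_nonneg _)) (sq_nonneg _))
      ⟨q, Finset.mem_univ q, ?_⟩
    exact div_pos (mul_pos (Complex.normSq_pos.2 hq) (pow_pos hμ 2)) (pow_pos (hσ₁ q) 2)
  have hψ₀' : ψ₀ = (S₀ : ℂ) * (starRingEnd ℂ) β := by
    rw [hψ₀, hS₀, Complex.ofReal_sum, Finset.sum_mul]
    refine Finset.sum_congr rfl fun p _ => ?_
    rw [hr0, map_mul]
    push_cast
    rw [← Complex.mul_conj]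
    have hσ : ((σ₀ p : ℂ)) ≠ 0 := Complex.ofReal_ne_zero.2 (hσ₀ p).ne'
    field_simp
  have hψ₁' : ψ₁ = (S₁ : ℂ) * (starRingEnd ℂ) β * Complex.exp (Complex.I * ω * τc) := by
    rw [hψ₁, hS₁, Complex.ofReal_sum, Finset.sum_mul, Finset.sum_mul]
    refine Finset.sum_congr rfl fun p _ => ?_
    rw [hr1]
    rw [map_mul, map_mul, map_mul, ← Complex.exp_conj]
    have hconj : (starRingEnd ℂ) (-(Complex.I * ω * τc)) = Complex.I * ω * τc := by
      simp [mul_comm]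
    rw [hconj]
    push_cast
    rw [← Complex.mul_conj]
    have hσ : ((σ₁ p : ℂ)) ≠ 0 := Complex.ofReal_ne_zero.2 (hσ₁ p).ne'
    have hconjμ : (starRingEnd ℂ) (μ : ℂ) = (μ : ℂ) := Complex.conj_ofReal μ
    rw [hconjμ]
    field_simp
  have key : ψ₁ * (starRingEnd ℂ) ψ₀ =
      ((S₁ * S₀ * Complex.normSq β : ℝ) : ℂ) * Complex.exp ((ω * τc : ℝ) * Complex.I) := by
    rw [hψ₀', hψ₁', map_mul, Complex.conj_conj]
    have : (starRingEnd ℂ) ((S₀ : ℂ)) = (S₀ : ℂ) := Complex.conj_ofReal S₀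
    rw [this]
    have hexp : Complex.exp (Complex.I * ω * τc) = Complex.exp ((ω * τc : ℝ) * Complex.I) := by
      push_cast; ring_nf
    rw [hexp, Complex.ofReal_mul, Complex.ofReal_mul, ← Complex.mul_conj]
    push_cast
    ring
  have hpos : 0 < S₁ * S₀ * Complex.normSq β := by
    have := Complex.normSq_pos.2 hβ; positivity
  have harg : Complex.arg (ψ₁ * (starRingEnd ℂ) ψ₀) = ω * τc := by
    rw [key, Complex.arg_real_mul _ hpos, Complex.exp_mul_I]
    exact Complex.arg_cos_add_sin_mul_I hω
  rw [harg]
  field_simp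
end

section
/- Let P be a positive integer, α : Fin P → ℂ, β ∈ ℂ, μ > 0, ω, τ_c ∈ ℝ, positive weights σ₀ p > 0, σ₁ p > 0, and let (Ω, 𝓕, ℙ) be a probability space carrying complex random noise variables n0_p, n1_p (p ∈ Fin P), each integrable with mean zero, such that the aggregated noises N₀ = Σ_p α_p · conj(n0_p)/(σ₀ p)² and N₁ = Σ_p α_p μ · conj(n1_p)/(σ₁ p)² are independent and integrable with N₁ · conj(N₀) integrable. Define the noisy correlation outputs r0_p = α_p β + n0_p and r1_p = α_p μ β e^{−iωτ_c} + n1_p, and ψ₀ = Σ_p α_p conj(r0_p)/(σ₀ p)², ψ₁ = Σ_p α_p μ conj(r1_p)/(σ₁ p)². Then E[ψ₁ · conj(ψ₀)] = |β|² · Γ₀ · Γ₁ · e^{iωτ_c}, where Γ₀ = Σ_p |α_p|²/(σ₀ p)² and Γ₁ = Σ_p |μ α_p|²/(σ₁ p)². -/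
open MeasureTheory Complex

open MeasureTheory in
lemma MeasureTheory.Integrable.conj' {Ω : Type*} [MeasurableSpace Ω] {P : Measure Ω} {f : Ω → ℂ}
    (hf : Integrable f P) : Integrable (fun x => (starRingEnd ℂ) (f x)) P := by
  simpa using (Complex.conjCLE.toContinuousLinearMap).integrable_comp hf

open MeasureTheory in
lemma integral_complex_decomp {Ω : Type*} [MeasurableSpace Ω] {P : Measure Ω} {f : Ω → ℂ}
    (hf : Integrable f P) :
    ∫ x, f x ∂P = ((∫ x, (f x).re ∂P : ℝ) : ℂ) + ((∫ x, (f x).im ∂P : ℝ) : ℂ) * Complex.I := by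
  have h := integral_coe_re_add_coe_im (𝕜 := ℂ) hf
  rw [← h, integral_ofReal, integral_ofReal]
  norm_num [RCLike.I]

open MeasureTheory in
lemma indepFun_integral_mul_complex {Ω : Type*} [MeasurableSpace Ω] {P : Measure Ω}
    [IsProbabilityMeasure P] {f g : Ω → ℂ} (h : ProbabilityTheory.IndepFun f g P)
    (hf : Integrable f P) (hg : Integrable g P)
    (hfg : Integrable (fun x => f x * g x) P) :
    ∫ x, f x * g x ∂P = (∫ x, f x ∂P) * (∫ x, g x ∂P) := by
  have habs : Integrable (fun x => ‖f x‖ * ‖g x‖) P := by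
    have := hfg.norm
    simpa [norm_mul] using this
  have key : ∀ (u v : ℂ → ℝ), Measurable u → Measurable v →
      (∀ z, |u z| ≤ ‖z‖) → (∀ z, |v z| ≤ ‖z‖) →
      Integrable (fun x => u (f x) * v (g x)) P ∧
      ∫ x, u (f x) * v (g x) ∂P = (∫ x, u (f x) ∂P) * (∫ x, v (g x) ∂P) := by
    intro u v hu hv hub hvb
    have hfm := hf.aestronglyMeasurable.aemeasurable
    have hgm := hg.aestronglyMeasurable.aemeasurable
    have hmu : AEStronglyMeasurable (fun x => u (f x)) P :=
      (hu.comp_aemeasurable hfm).aestronglyMeasurable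
    have hmv : AEStronglyMeasurable (fun x => v (g x)) P :=
      (hv.comp_aemeasurable hgm).aestronglyMeasurable
    have hif : Integrable (fun x => u (f x)) P := by
      refine hf.norm.mono' hmu (Filter.Eventually.of_forall fun x => ?_)
      rw [Real.norm_eq_abs]
      exact hub _
    have hiv : Integrable (fun x => v (g x)) P := by
      refine hg.norm.mono' hmv (Filter.Eventually.of_forall fun x => ?_)
      rw [Real.norm_eq_abs]
      exact hvb _
    have hint : Integrable (fun x => u (f x) * v (g x)) P := by
      refine habs.mono' (hmu.mul hmv) (Filter.Eventually.of_forall fun x => ?_)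
      rw [Real.norm_eq_abs, abs_mul]
      exact mul_le_mul (hub _) (hvb _) (abs_nonneg _) (norm_nonneg _)
    exact ⟨hint, (h.comp hu hv).integral_fun_mul_eq_mul_integral hif.aestronglyMeasurable hiv.aestronglyMeasurable⟩
  obtain ⟨irr, err⟩ := key Complex.re Complex.re Complex.measurable_re Complex.measurable_re
    (fun z => Complex.abs_re_le_norm z) (fun z => Complex.abs_re_le_norm z)
  obtain ⟨iri, eri⟩ := key Complex.re Complex.im Complex.measurable_re Complex.measurable_im
    (fun z => Complex.abs_re_le_norm z) (fun z => Complex.abs_im_le_norm z)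
  obtain ⟨iir, eir⟩ := key Complex.im Complex.re Complex.measurable_im Complex.measurable_re
    (fun z => Complex.abs_im_le_norm z) (fun z => Complex.abs_re_le_norm z)
  obtain ⟨iii, eii⟩ := key Complex.im Complex.im Complex.measurable_im Complex.measurable_im
    (fun z => Complex.abs_im_le_norm z) (fun z => Complex.abs_im_le_norm z)
  rw [integral_complex_decomp hfg, integral_complex_decomp hf, integral_complex_decomp hg]
  have hre : (fun x => (f x * g x).re) = fun x => (f x).re * (g x).re - (f x).im * (g x).im := by
    funext x; exact Complex.mul_re _ _
  have him : (fun x => (f x * g x).im) = fun x => (f x).re * (g x).im + (f x).im * (g x).re := by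
    funext x; exact Complex.mul_im _ _
  rw [hre, him, integral_sub irr iii, integral_add iri iir, err, eii, eri, eir]
  push_cast
  ring_nf
  linear_combination (-((∫ x, (f x).im ∂P : ℝ) : ℂ) * ((∫ x, (g x).im ∂P : ℝ) : ℂ)) * Complex.I_mul_I

/-- with zero-mean noise on the correlation outputs, and the two
aggregated noises independent, the expectation of the cross-preamble statistic
is `E[ψ₁·conj(ψ₀)] = |β|²·Γ₀·Γ₁·e^{iωτ_c}`. -/
theorem cross_preamble_statistic_unbiased
    {Ω : Type*} [MeasurableSpace Ω] (P : Measure Ω) [IsProbabilityMeasure P]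
    (Pn : ℕ) (hPn : 0 < Pn) (α : Fin Pn → ℂ) (β : ℂ) (μ : ℝ) (hμ : 0 < μ)
    (ω τc : ℝ)
    (σ₀ σ₁ : Fin Pn → ℝ) (hσ₀ : ∀ p, 0 < σ₀ p) (hσ₁ : ∀ p, 0 < σ₁ p)
    (n0 n1 : Fin Pn → Ω → ℂ)
    (hint0 : ∀ p, Integrable (n0 p) P) (hint1 : ∀ p, Integrable (n1 p) P)
    (hmean0 : ∀ p, ∫ x, n0 p x ∂P = 0) (hmean1 : ∀ p, ∫ x, n1 p x ∂P = 0)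
    (N₀ N₁ : Ω → ℂ)
    (hN₀ : ∀ x, N₀ x = ∑ p : Fin Pn, α p * (starRingEnd ℂ) (n0 p x) / ((σ₀ p : ℂ) ^ 2))
    (hN₁ : ∀ x, N₁ x = ∑ p : Fin Pn, α p * (μ : ℂ) * (starRingEnd ℂ) (n1 p x) / ((σ₁ p : ℂ) ^ 2))
    (hindep : ProbabilityTheory.IndepFun N₁ N₀ P)
    (hintN₀ : Integrable N₀ P) (hintN₁ : Integrable N₁ P)
    (hintprod : Integrable (fun x => N₁ x * (starRingEnd ℂ) (N₀ x)) P)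
    (r0 r1 : Fin Pn → Ω → ℂ)
    (hr0 : ∀ p x, r0 p x = α p * β + n0 p x)
    (hr1 : ∀ p x, r1 p x = α p * (μ : ℂ) * β * Complex.exp (-(Complex.I * ω * τc)) + n1 p x)
    (ψ₀ ψ₁ : Ω → ℂ)
    (hψ₀ : ∀ x, ψ₀ x = ∑ p : Fin Pn, α p * (starRingEnd ℂ) (r0 p x) / ((σ₀ p : ℂ) ^ 2))
    (hψ₁ : ∀ x, ψ₁ x = ∑ p : Fin Pn, α p * (μ : ℂ) * (starRingEnd ℂ) (r1 p x) / ((σ₁ p : ℂ) ^ 2))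
    (hintψ : Integrable (fun x => ψ₁ x * (starRingEnd ℂ) (ψ₀ x)) P)
    (Γ₀ Γ₁ : ℝ)
    (hΓ₀ : Γ₀ = ∑ p : Fin Pn, ‖α p‖ ^ 2 / (σ₀ p) ^ 2)
    (hΓ₁ : Γ₁ = ∑ p : Fin Pn, ‖(μ : ℂ) * α p‖ ^ 2 / (σ₁ p) ^ 2) :
    ∫ x, ψ₁ x * (starRingEnd ℂ) (ψ₀ x) ∂P =
      ((‖β‖ ^ 2 : ℝ) : ℂ) * (Γ₀ : ℂ) * (Γ₁ : ℂ) *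
        Complex.exp (Complex.I * ω * τc) := by

  classical
  -- constants
  set c₀ : ℂ := (starRingEnd ℂ) β * (Γ₀ : ℂ) with hc₀
  set c₁ : ℂ := (starRingEnd ℂ) β * (Γ₁ : ℂ) * Complex.exp (Complex.I * ω * τc) with hc₁
  -- pointwise decomposition of ψ₀
  have hψ₀' : ∀ x, ψ₀ x = c₀ + N₀ x := by
    intro x
    rw [hψ₀ x, hN₀ x, hc₀, hΓ₀]
    push_cast
    rw [Finset.mul_sum, ← Finset.sum_add_distrib]
    refine Finset.sum_congr rfl fun p _ => ?_
    have h1 : ((‖α p‖ : ℝ) : ℂ) ^ 2 = α p * (starRingEnd ℂ) (α p) := by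
      rw [Complex.mul_conj]; norm_cast; rw [Complex.sq_norm]
    rw [hr0 p x, map_add, map_mul, h1]
    ring
  have hψ₁' : ∀ x, ψ₁ x = c₁ + N₁ x := by
    intro x
    rw [hψ₁ x, hN₁ x, hc₁, hΓ₁]
    push_cast
    rw [Finset.mul_sum, Finset.sum_mul, ← Finset.sum_add_distrib]
    refine Finset.sum_congr rfl fun p _ => ?_
    have h1 : ((‖(μ:ℂ) * α p‖ : ℝ) : ℂ) ^ 2 = ((μ:ℂ) * α p) * (starRingEnd ℂ) ((μ:ℂ) * α p) := by
      rw [Complex.mul_conj]; norm_cast; rw [Complex.sq_norm]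
    have h2 : (starRingEnd ℂ) (Complex.exp (-(Complex.I * ω * τc))) = Complex.exp (Complex.I * ω * τc) := by
      rw [← Complex.exp_conj]
      congr 1
      simp [map_mul]
    rw [hr1 p x, map_add, map_mul, map_mul, map_mul, h2, h1]
    simp only [map_mul, Complex.conj_ofReal]
    ring
  -- mean of N₀ is zero
  have hmeanN₀ : ∫ x, N₀ x ∂P = 0 := by
    have : ∫ x, N₀ x ∂P = ∑ p : Fin Pn, ∫ x, α p * (starRingEnd ℂ) (n0 p x) / ((σ₀ p : ℂ) ^ 2) ∂P := by
      rw [← integral_finset_sum]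
      · exact integral_congr_ae (Filter.Eventually.of_forall hN₀)
      · intro p _
        exact ((hint0 p).conj'.const_mul (α p / ((σ₀ p : ℂ) ^ 2))).congr
          (Filter.Eventually.of_forall fun x => by ring)
    rw [this]
    refine Finset.sum_eq_zero fun p _ => ?_
    have : (fun x => α p * (starRingEnd ℂ) (n0 p x) / ((σ₀ p : ℂ) ^ 2))
        = fun x => (α p / ((σ₀ p : ℂ) ^ 2)) * (starRingEnd ℂ) (n0 p x) := by
      funext x; ring
    rw [this, integral_const_mul, integral_conj, hmean0 p]
    simp
  have hmeanN₁ : ∫ x, N₁ x ∂P = 0 := by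
    have : ∫ x, N₁ x ∂P = ∑ p : Fin Pn, ∫ x, α p * (μ:ℂ) * (starRingEnd ℂ) (n1 p x) / ((σ₁ p : ℂ) ^ 2) ∂P := by
      rw [← integral_finset_sum]
      · exact integral_congr_ae (Filter.Eventually.of_forall hN₁)
      · intro p _
        exact ((hint1 p).conj'.const_mul (α p * (μ:ℂ) / ((σ₁ p : ℂ) ^ 2))).congr
          (Filter.Eventually.of_forall fun x => by ring)
    rw [this]
    refine Finset.sum_eq_zero fun p _ => ?_
    have : (fun x => α p * (μ:ℂ) * (starRingEnd ℂ) (n1 p x) / ((σ₁ p : ℂ) ^ 2))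
        = fun x => (α p * (μ:ℂ) / ((σ₁ p : ℂ) ^ 2)) * (starRingEnd ℂ) (n1 p x) := by
      funext x; ring
    rw [this, integral_const_mul, integral_conj, hmean1 p]
    simp
  -- independence gives product expectation zero
  have hindep' : ProbabilityTheory.IndepFun N₁ (fun x => (starRingEnd ℂ) (N₀ x)) P := by
    exact hindep.comp measurable_id (Complex.continuous_conj.measurable)
  have hprodzero : ∫ x, N₁ x * (starRingEnd ℂ) (N₀ x) ∂P = 0 := by
    rw [indepFun_integral_mul_complex hindep' hintN₁ hintN₀.conj' hintprod, hmeanN₁]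
    simp
  -- expand the integrand
  have hexp : (fun x => ψ₁ x * (starRingEnd ℂ) (ψ₀ x))
      = fun x => c₁ * (starRingEnd ℂ) c₀ + (c₁ * (starRingEnd ℂ) (N₀ x)
          + ((starRingEnd ℂ) c₀ * N₁ x + N₁ x * (starRingEnd ℂ) (N₀ x))) := by
    funext x
    rw [hψ₀' x, hψ₁' x, map_add]
    ring
  rw [integral_congr_ae (Filter.Eventually.of_forall fun x => congrFun hexp x)]
  have i1 : Integrable (fun x => c₁ * (starRingEnd ℂ) (N₀ x)) P := hintN₀.conj'.const_mul c₁
  have i2 : Integrable (fun x => (starRingEnd ℂ) c₀ * N₁ x) P := hintN₁.const_mul _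
  have iA : Integrable (fun x => (starRingEnd ℂ) c₀ * N₁ x + N₁ x * (starRingEnd ℂ) (N₀ x)) P :=
    i2.add hintprod
  have iB : Integrable (fun x => c₁ * (starRingEnd ℂ) (N₀ x)
      + ((starRingEnd ℂ) c₀ * N₁ x + N₁ x * (starRingEnd ℂ) (N₀ x))) P := i1.add iA
  rw [integral_add (integrable_const _) iB, integral_const,
      integral_add i1 iA, integral_add i2 hintprod,
      integral_const_mul, integral_const_mul, integral_conj, hmeanN₀, hmeanN₁, hprodzero]
  simp only [map_zero, mul_zero, add_zero, integral_const, measure_univ, ENNReal.toReal_one, probReal_univ,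
    one_smul, smul_eq_mul]
  rw [hc₁, hc₀, map_mul, Complex.conj_conj, Complex.conj_ofReal]
  have hb : β * (starRingEnd ℂ) β = ((‖β‖ ^ 2 : ℝ) : ℂ) := by
    rw [Complex.mul_conj]; norm_cast; rw [Complex.sq_norm]
  linear_combination ((Γ₀ : ℂ) * (Γ₁ : ℂ) * Complex.exp (Complex.I * ω * τc)) * hb
end
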